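/- arXiv:2602.00905 — 5 statements merged into one kernel-verified Lean document; each statement's English description precedes it below -/
import Mathlib

section
/- Let p2, p3, ψ40, k1 be positive real constants and define ψ3(q2) = cos(q2) / (k1 + (p2/(p3·ψ40))·sin²(q2)). Then for every q2 ∈ (-π/2, π/2), ψ3 is differentiable at q2 and satisfies the Riccati equation ψ3'(q2) = -tan(q2)·ψ3(q2) - (2·p2/(p3·ψ40))·sin(q2)·ψ3(q2)². -/
open Real

theorem hasDerivAt_cos_div_add_mul_sin_sq {k a x : ℝ} (hcos : cos x ≠ 0)
    (hD : k + a * sin x ^ 2 ≠ 0) :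
    HasDerivAt (fun y => cos y / (k + a * sin y ^ 2))
      (-tan x * (cos x / (k + a * sin x ^ 2))
        - 2 * a * sin x * (cos x / (k + a * sin x ^ 2)) ^ 2) x := by
  refine ((hasDerivAt_cos x).div
    ((((hasDerivAt_sin x).pow 2).const_mul a).const_add k) hD).congr_deriv ?_
  simp only [Pi.pow_apply, tan_eq_sin_div_cos]
  field_simp
  ring

/-- the function ψ3(q2) = cos(q2)/(k1 + (p2/(p3·ψ40))·sin²(q2)) is
differentiable on (-π/2, π/2) and satisfies the Riccati equation
ψ3' = -tan(q2)·ψ3 - (2·p2/(p3·ψ40))·sin(q2)·ψ3². -/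
theorem stmt0 (p2 p3 ψ40 k1 : ℝ) (hp2 : 0 < p2) (hp3 : 0 < p3)
    (hψ40 : 0 < ψ40) (hk1 : 0 < k1)
    (ψ3 : ℝ → ℝ)
    (hψ3 : ∀ q2, ψ3 q2 = cos q2 / (k1 + p2 / (p3 * ψ40) * sin q2 ^ 2)) :
    ∀ q2 ∈ Set.Ioo (-(π / 2)) (π / 2),
      HasDerivAt ψ3
        (-tan q2 * ψ3 q2 - 2 * p2 / (p3 * ψ40) * sin q2 * ψ3 q2 ^ 2) q2 := by
  intro q2 hq2
  obtain rfl : ψ3 = fun q => cos q / (k1 + p2 / (p3 * ψ40) * sin q ^ 2) := funext hψ3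
  have hD : 0 < k1 + p2 / (p3 * ψ40) * sin q2 ^ 2 := by positivity
  rw [mul_div_assoc]
  exact hasDerivAt_cos_div_add_mul_sin_sq (cos_pos_of_mem_Ioo hq2).ne' hD.ne'
end

section
/- Let η : (-π/2, π/2) → ℝ be differentiable and suppose η'(q2) = η(q2)·tan(q2) + (2·p2/(p3·ψ40))·sin(q2) for all q2 ∈ (-π/2, π/2), where p2, p3, ψ40 are positive real constants. Then there exists a real constant C such that η(q2) = (C + (p2/(p3·ψ40))·sin²(q2)) / cos(q2) for all q2 ∈ (-π/2, π/2). -/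
open Real

/-! Multiplying by the integrating factor `cos` turns the equation into
`(η cos)' = 2 k sin cos = (k sin²)'` with `k = p2 / (p3 ψ40)`, so `η cos - k sin²` is constant
on the connected interval where `cos` does not vanish. -/

theorem hasDerivAt_mul_cos_sub_mul_sin_sq {η : ℝ → ℝ} {k x : ℝ} (hx : cos x ≠ 0)
    (hη : HasDerivAt η (η x * tan x + 2 * k * sin x) x) :
    HasDerivAt (fun y => η y * cos y - k * sin y ^ 2) 0 x := by
  refine ((hη.mul (hasDerivAt_cos x)).sub
    (((hasDerivAt_sin x).pow 2).const_mul k)).congr_deriv ?_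
  rw [tan_eq_sin_div_cos]
  field_simp
  ring

theorem stmt5_general (p2 p3 ψ40 : ℝ)
    (η : ℝ → ℝ)
    (hη : ∀ q2 ∈ Set.Ioo (-(π / 2)) (π / 2),
      HasDerivAt η (η q2 * tan q2 + 2 * p2 / (p3 * ψ40) * sin q2) q2) :
    ∃ C : ℝ, ∀ q2 ∈ Set.Ioo (-(π / 2)) (π / 2),
      η q2 = (C + p2 / (p3 * ψ40) * sin q2 ^ 2) / cos q2 := by
  set k := p2 / (p3 * ψ40)
  have hderiv : ∀ x ∈ Set.Ioo (-(π / 2)) (π / 2),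
      HasDerivAt (fun y => η y * cos y - k * sin y ^ 2) 0 x := fun x hx =>
    hasDerivAt_mul_cos_sub_mul_sin_sq (cos_pos_of_mem_Ioo hx).ne'
      (by simpa only [mul_div_assoc] using hη x hx)
  obtain ⟨C, hC⟩ := isOpen_Ioo.exists_is_const_of_deriv_eq_zero isPreconnected_Ioo
    (fun x hx => (hderiv x hx).differentiableAt.differentiableWithinAt)
    (fun x hx => (hderiv x hx).deriv)
  refine ⟨C, fun x hx => ?_⟩
  rw [eq_div_iff (cos_pos_of_mem_Ioo hx).ne', ← hC x hx]
  ring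

/-- any differentiable solution on (-π/2, π/2) of the linear ODE
η' = η·tan + (2·p2/(p3·ψ40))·sin has the form
η(q2) = (C + (p2/(p3·ψ40))·sin²(q2))/cos(q2) for some constant C. -/
theorem stmt5 (p2 p3 ψ40 : ℝ) (hp2 : 0 < p2) (hp3 : 0 < p3) (hψ40 : 0 < ψ40)
    (η : ℝ → ℝ)
    (hη : ∀ q2 ∈ Set.Ioo (-(π / 2)) (π / 2),
      HasDerivAt η (η q2 * tan q2 + 2 * p2 / (p3 * ψ40) * sin q2) q2) :
    ∃ C : ℝ, ∀ q2 ∈ Set.Ioo (-(π / 2)) (π / 2),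
      η q2 = (C + p2 / (p3 * ψ40) * sin q2 ^ 2) / cos q2 :=
  stmt5_general p2 p3 ψ40 η hη
end

section
/- Let p2, p3, p5, ψ40, k1, κ be positive real constants. Define ψ3(q2) = cos(q2) / (k1 + (p2/(p3·ψ40))·sin²(q2)) and V_d(q1, q2) = (κ/2)·( q1 + sqrt(p3/(k1·p2·ψ40))·arctan( sqrt(p2/(k1·p3·ψ40))·sin(q2) ) )² - (p5/ψ40)·cos(q2). Then for all (q1, q2) ∈ ℝ², the potential matching PDE holds: -p5·sin(q2) = ψ3(q2)·(∂V_d/∂q1)(q1, q2) - ψ40·(∂V_d/∂q2)(q1, q2). -/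
open Real

/-! With `S = q₁ + a·arctan (b·sin q₂)` one has `∂₁V = κS` and
`∂₂V = κS · a·b·cos q₂ / (1 + b² sin² q₂) + c·sin q₂`. Since
`ψ₃ = cos q₂ / (k₁ (1 + b² sin² q₂))`, the `κS`-terms of `ψ₃ ∂₁V - ψ₄₀ ∂₂V` carry the factor
`1 - a·b·k₁·ψ₄₀`, which vanishes for the chosen square roots, leaving `-ψ₄₀ c sin q₂ = -p₅ sin q₂`. -/

noncomputable def shapedPotential (κ a b c q₁ q₂ : ℝ) : ℝ :=
  κ / 2 * (q₁ + a * arctan (b * sin q₂)) ^ 2 - c * cos q₂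

namespace shapedPotential

variable (κ a b c : ℝ)

theorem hasDerivAt_fst (q₁ q₂ : ℝ) :
    HasDerivAt (fun x => shapedPotential κ a b c x q₂)
      (κ * (q₁ + a * arctan (b * sin q₂))) q₁ := by
  have h := ((((hasDerivAt_id' q₁).add_const (a * arctan (b * sin q₂))).pow 2).const_mul
    (κ / 2)).sub_const (c * cos q₂)
  exact h.congr_deriv (by ring)

theorem hasDerivAt_snd (q₁ q₂ : ℝ) :
    HasDerivAt (fun y => shapedPotential κ a b c q₁ y)
      (κ * (q₁ + a * arctan (b * sin q₂)) * (a * b * cos q₂ / (1 + (b * sin q₂) ^ 2))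
        + c * sin q₂) q₂ := by
  have harctan := ((hasDerivAt_sin q₂).const_mul b).arctan
  have h := (((harctan.const_mul a).const_add q₁).pow 2).const_mul (κ / 2) |>.sub
    ((hasDerivAt_cos q₂).const_mul c)
  exact h.congr_deriv (by ring)

theorem matching_pde {k ψ : ℝ} (hk : k ≠ 0) (hab : a * b * (k * ψ) = 1) (q₁ q₂ : ℝ) :
    cos q₂ / (k * (1 + (b * sin q₂) ^ 2)) * deriv (fun x => shapedPotential κ a b c x q₂) q₁
      - ψ * deriv (fun y => shapedPotential κ a b c q₁ y) q₂ = -(ψ * c) * sin q₂ := by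
  rw [(hasDerivAt_fst κ a b c q₁ q₂).deriv, (hasDerivAt_snd κ a b c q₁ q₂).deriv]
  have hden : 1 + (b * sin q₂) ^ 2 ≠ 0 := by positivity
  field_simp
  linear_combination -(κ * (q₁ + a * arctan (b * sin q₂)) * cos q₂) * hab

end shapedPotential

theorem stmt6_general (p2 p3 p5 ψ40 k1 κ : ℝ) (hp2 : 0 < p2) (hp3 : 0 < p3)
    (hψ40 : 0 < ψ40) (hk1 : 0 < k1)
    (ψ3 : ℝ → ℝ)
    (hψ3 : ∀ q2, ψ3 q2 = cos q2 / (k1 + p2 / (p3 * ψ40) * sin q2 ^ 2))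
    (Vd : ℝ → ℝ → ℝ)
    (hVd : ∀ q1 q2, Vd q1 q2 =
      κ / 2 * (q1 + sqrt (p3 / (k1 * p2 * ψ40))
          * arctan (sqrt (p2 / (k1 * p3 * ψ40)) * sin q2)) ^ 2
        - p5 / ψ40 * cos q2) :
    ∀ q1 q2 : ℝ,
      -p5 * sin q2 =
        ψ3 q2 * deriv (fun x => Vd x q2) q1 - ψ40 * deriv (fun y => Vd q1 y) q2 := by
  intro q1 q2
  set a := sqrt (p3 / (k1 * p2 * ψ40))
  set b := sqrt (p2 / (k1 * p3 * ψ40))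
  obtain rfl : Vd = shapedPotential κ a b (p5 / ψ40) := funext₂ hVd
  have hab : a * b * (k1 * ψ40) = 1 := by
    rw [← sqrt_mul (by positivity), ← sqrt_sq (by positivity : 0 ≤ k1 * ψ40),
      ← sqrt_mul (by positivity)]
    field_simp
    exact sqrt_one
  have hψ3_eq : ψ3 q2 = cos q2 / (k1 * (1 + (b * sin q2) ^ 2)) := by
    rw [hψ3, mul_pow, sq_sqrt (by positivity)]
    field_simp
  rw [hψ3_eq, shapedPotential.matching_pde κ a b _ hk1.ne' hab]
  field_simp

/-- the shaped potential energy V_d of Theorem 1 satisfies the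
potential matching PDE  -p5·sin(q2) = ψ3(q2)·∂V_d/∂q1 - ψ40·∂V_d/∂q2  on ℝ². -/
theorem stmt6 (p2 p3 p5 ψ40 k1 κ : ℝ) (hp2 : 0 < p2) (hp3 : 0 < p3)
    (hp5 : 0 < p5) (hψ40 : 0 < ψ40) (hk1 : 0 < k1) (hκ : 0 < κ)
    (ψ3 : ℝ → ℝ)
    (hψ3 : ∀ q2, ψ3 q2 = cos q2 / (k1 + p2 / (p3 * ψ40) * sin q2 ^ 2))
    (Vd : ℝ → ℝ → ℝ)
    (hVd : ∀ q1 q2, Vd q1 q2 =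
      κ / 2 * (q1 + sqrt (p3 / (k1 * p2 * ψ40))
          * arctan (sqrt (p2 / (k1 * p3 * ψ40)) * sin q2)) ^ 2
        - p5 / ψ40 * cos q2) :
    ∀ q1 q2 : ℝ,
      -p5 * sin q2 =
        ψ3 q2 * deriv (fun x => Vd x q2) q1 - ψ40 * deriv (fun y => Vd q1 y) q2 :=
  stmt6_general p2 p3 p5 ψ40 k1 κ hp2 hp3 hψ40 hk1 ψ3 hψ3 Vd hVd
end

section
/- Let p2, p3, ψ40, k1 be positive real constants. Define ψ3(q2) = cos(q2) / (k1 + (p2/(p3·ψ40))·sin²(q2)) and z(q1, q2) = q1 + sqrt(p3/(k1·p2·ψ40))·arctan( sqrt(p2/(k1·p3·ψ40))·sin(q2) ). Then for all (q1, q2) ∈ ℝ², ψ3(q2)·(∂z/∂q1)(q1, q2) - ψ40·(∂z/∂q2)(q1, q2) = 0. -/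
/-! With `a = √(p3/(k1 p2 ψ40))` and `b = √(p2/(k1 p3 ψ40))` one has `∂z/∂q1 = 1` and
`∂z/∂q2 = a b cos q2 / (1 + b² sin² q2)`. Since `a b = 1/(k1 ψ40)` and `k1 b² = p2/(p3 ψ40)`,
`ψ40 ∂z/∂q2 = cos q2 / (k1 + p2/(p3 ψ40) sin² q2) = ψ3(q2)`. -/

open Real

theorem hasDerivAt_arctan_const_mul_sin (b x : ℝ) :
    HasDerivAt (fun y => arctan (b * sin y)) (b * cos x / (1 + b ^ 2 * sin x ^ 2)) x := by
  convert ((hasDerivAt_sin x).const_mul b).arctan using 1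
  field_simp

section PendulumConstants

variable {p2 p3 ψ40 k1 : ℝ}

theorem sqrt_mul_sqrt_eq_inv (hp2 : 0 < p2) (hp3 : 0 < p3) (hψ40 : 0 < ψ40) (hk1 : 0 < k1) :
    sqrt (p3 / (k1 * p2 * ψ40)) * sqrt (p2 / (k1 * p3 * ψ40)) = (k1 * ψ40)⁻¹ := by
  rw [← sqrt_mul (by positivity), ← sqrt_sq (inv_nonneg.mpr (by positivity : 0 ≤ k1 * ψ40))]
  congr 1
  field_simp

theorem psi40_mul_partial_z_eq_psi3 (hp2 : 0 < p2) (hp3 : 0 < p3) (hψ40 : 0 < ψ40) (hk1 : 0 < k1)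
    (q : ℝ) :
    ψ40 * (sqrt (p3 / (k1 * p2 * ψ40)) * (sqrt (p2 / (k1 * p3 * ψ40)) * cos q /
        (1 + sqrt (p2 / (k1 * p3 * ψ40)) ^ 2 * sin q ^ 2))) =
      cos q / (k1 + p2 / (p3 * ψ40) * sin q ^ 2) := by
  rw [mul_div_assoc', ← mul_assoc, sqrt_mul_sqrt_eq_inv hp2 hp3 hψ40 hk1,
    sq_sqrt (by positivity)]
  have : 0 < k1 + p2 / (p3 * ψ40) * sin q ^ 2 := by positivity
  field_simp

end PendulumConstants

/-- the characteristic invariant z of the potential matching PDE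
satisfies ψ3(q2)·∂z/∂q1 - ψ40·∂z/∂q2 = 0 on ℝ². -/
theorem stmt7 (p2 p3 ψ40 k1 : ℝ) (hp2 : 0 < p2) (hp3 : 0 < p3)
    (hψ40 : 0 < ψ40) (hk1 : 0 < k1)
    (ψ3 : ℝ → ℝ)
    (hψ3 : ∀ q2, ψ3 q2 = cos q2 / (k1 + p2 / (p3 * ψ40) * sin q2 ^ 2))
    (z : ℝ → ℝ → ℝ)
    (hz : ∀ q1 q2, z q1 q2 =
      q1 + sqrt (p3 / (k1 * p2 * ψ40))
        * arctan (sqrt (p2 / (k1 * p3 * ψ40)) * sin q2)) :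
    ∀ q1 q2 : ℝ,
      ψ3 q2 * deriv (fun x => z x q2) q1 - ψ40 * deriv (fun y => z q1 y) q2 = 0 := by
  intro q1 q2
  have hz₁ : deriv (fun x => z x q2) q1 = 1 := by
    simp only [hz, deriv_add_const, deriv_id'']
  have hz₂ := (((hasDerivAt_arctan_const_mul_sin (sqrt (p2 / (k1 * p3 * ψ40))) q2).const_mul
    (sqrt (p3 / (k1 * p2 * ψ40)))).const_add q1).deriv
  simp only [← hz] at hz₂
  rw [hz₁, hz₂, hψ3, mul_one, psi40_mul_partial_z_eq_psi3 hp2 hp3 hψ40 hk1, sub_self]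
end

section
/- Let n, m be positive natural numbers, J an open interval, and let q, p : J → ℝⁿ be differentiable. Let H_d : ℝⁿ × ℝⁿ → ℝ be continuously differentiable with partial gradients ∇_q H_d and ∇_p H_d. Let M, M_d : J → Matrix n n ℝ be such that for each t ∈ J, M(t) and M_d(t) are symmetric and invertible, let J₂ : J → Matrix n n ℝ satisfy J₂(t)ᵀ = -J₂(t) for all t, let G be a constant n×m real matrix and K_v a symmetric m×m real matrix. Suppose that for all t ∈ J: q'(t) = M(t)⁻¹·M_d(t)·∇_p H_d(q(t), p(t)) and p'(t) = -M_d(t)·M(t)⁻¹·∇_q H_d(q(t), p(t)) + (J₂(t) - G·K_v·Gᵀ)·∇_p H_d(q(t), p(t)). Then for all t ∈ J, the derivative of t ↦ H_d(q(t), p(t)) equals -(∇_p H_d(q(t), p(t)))ᵀ · G·K_v·Gᵀ · ∇_p H_d(q(t), p(t)). -/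
open Matrix

namespace Matrix

variable {ι R : Type*} [Fintype ι]

theorem dotProduct_mulVec_self_eq_zero_of_transpose_eq_neg [CommRing R] [NoZeroDivisors R]
    [CharZero R] {A : Matrix ι ι R} (hA : Aᵀ = -A) (x : ι → R) : x ⬝ᵥ A *ᵥ x = 0 := by
  have h : x ⬝ᵥ A *ᵥ x = -(x ⬝ᵥ A *ᵥ x) := by
    conv_lhs => rw [← dotProduct_transpose_mulVec, hA, neg_mulVec, dotProduct_neg]
  exact self_eq_neg.mp h

variable [DecidableEq ι] [CommRing R]

theorem dotProduct_inv_mul_mulVec_of_isSymm {A B : Matrix ι ι R} (hA : A.IsSymm)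
    (hB : B.IsSymm) (x y : ι → R) : x ⬝ᵥ (A⁻¹ * B) *ᵥ y = y ⬝ᵥ (B * A⁻¹) *ᵥ x := by
  rw [← dotProduct_transpose_mulVec, transpose_mul, transpose_nonsing_inv, hA.eq, hB.eq]

/-- The interconnection terms cancel since `(M⁻¹ M_d)ᵀ = M_d M⁻¹`, and `J₂` does no work. -/
theorem dotProduct_closedLoop_eq_neg_damping [NoZeroDivisors R] [CharZero R]
    {M Md J₂ : Matrix ι ι R} (hM : M.IsSymm) (hMd : Md.IsSymm) (hJ₂ : J₂ᵀ = -J₂)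
    (D : Matrix ι ι R) (gq gp : ι → R) :
    gq ⬝ᵥ (M⁻¹ * Md) *ᵥ gp + gp ⬝ᵥ (-((Md * M⁻¹) *ᵥ gq) + (J₂ - D) *ᵥ gp)
      = -(gp ⬝ᵥ D *ᵥ gp) := by
  rw [dotProduct_inv_mul_mulVec_of_isSymm hM hMd, sub_mulVec, dotProduct_add, dotProduct_sub,
    dotProduct_mulVec_self_eq_zero_of_transpose_eq_neg hJ₂, dotProduct_neg]
  ring

end Matrix

theorem stmt16_general (n m : ℕ)
    (J : Set ℝ)
    (q p : ℝ → (Fin n → ℝ))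
    (Hd : (Fin n → ℝ) → (Fin n → ℝ) → ℝ)
    (hHdC1 : ContDiff ℝ 1 (fun z : (Fin n → ℝ) × (Fin n → ℝ) => Hd z.1 z.2))
    (gradq gradp : (Fin n → ℝ) → (Fin n → ℝ) → (Fin n → ℝ))
    (hgrad : ∀ x y u v : Fin n → ℝ,
      fderiv ℝ (fun z : (Fin n → ℝ) × (Fin n → ℝ) => Hd z.1 z.2) (x, y) (u, v)
        = gradq x y ⬝ᵥ u + gradp x y ⬝ᵥ v)
    (M Md : ℝ → Matrix (Fin n) (Fin n) ℝ)
    (hMsymm : ∀ t ∈ J, (M t).IsSymm)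
    (hMdsymm : ∀ t ∈ J, (Md t).IsSymm)
    (J₂ : ℝ → Matrix (Fin n) (Fin n) ℝ)
    (hJ₂ : ∀ t ∈ J, (J₂ t)ᵀ = -(J₂ t))
    (G : Matrix (Fin n) (Fin m) ℝ) (Kv : Matrix (Fin m) (Fin m) ℝ)
    (hqdyn : ∀ t ∈ J,
      HasDerivAt q (((M t)⁻¹ * Md t).mulVec (gradp (q t) (p t))) t)
    (hpdyn : ∀ t ∈ J,
      HasDerivAt p (-((Md t * (M t)⁻¹).mulVec (gradq (q t) (p t)))
        + (J₂ t - G * Kv * Gᵀ).mulVec (gradp (q t) (p t))) t) :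
    ∀ t ∈ J,
      HasDerivAt (fun s => Hd (q s) (p s))
        (-(gradp (q t) (p t) ⬝ᵥ (G * Kv * Gᵀ).mulVec (gradp (q t) (p t)))) t := by
  intro t ht
  have hchain := (hHdC1.differentiable one_ne_zero (q t, p t)).hasFDerivAt.comp_hasDerivAt t
    ((hqdyn t ht).prodMk (hpdyn t ht))
  rwa [hgrad, dotProduct_closedLoop_eq_neg_damping (hMsymm t ht) (hMdsymm t ht) (hJ₂ t ht)]
    at hchain

/-- energy-dissipation identity for the IDA-PBC closed loop (2):
along trajectories of q' = M⁻¹·M_d·∇ₚH_d,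
p' = -M_d·M⁻¹·∇_qH_d + (J₂ - G·K_v·Gᵀ)·∇ₚH_d, with M, M_d symmetric invertible,
J₂ skew-symmetric, G constant and K_v symmetric, the desired energy satisfies
(d/dt) H_d(q,p) = -(∇ₚH_d)ᵀ·G·K_v·Gᵀ·∇ₚH_d. -/
theorem stmt16 (n m : ℕ) (hn : 0 < n) (hm : 0 < m)
    (J : Set ℝ) (hJopen : IsOpen J) (hJinterval : J.OrdConnected)
    (q p : ℝ → (Fin n → ℝ))
    (hq : ∀ t ∈ J, DifferentiableAt ℝ q t) (hp : ∀ t ∈ J, DifferentiableAt ℝ p t)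
    (Hd : (Fin n → ℝ) → (Fin n → ℝ) → ℝ)
    (hHdC1 : ContDiff ℝ 1 (fun z : (Fin n → ℝ) × (Fin n → ℝ) => Hd z.1 z.2))
    (gradq gradp : (Fin n → ℝ) → (Fin n → ℝ) → (Fin n → ℝ))
    (hgrad : ∀ x y u v : Fin n → ℝ,
      fderiv ℝ (fun z : (Fin n → ℝ) × (Fin n → ℝ) => Hd z.1 z.2) (x, y) (u, v)
        = gradq x y ⬝ᵥ u + gradp x y ⬝ᵥ v)
    (M Md : ℝ → Matrix (Fin n) (Fin n) ℝ)
    (hMsymm : ∀ t ∈ J, (M t).IsSymm) (hMinv : ∀ t ∈ J, IsUnit (M t).det)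
    (hMdsymm : ∀ t ∈ J, (Md t).IsSymm) (hMdinv : ∀ t ∈ J, IsUnit (Md t).det)
    (J₂ : ℝ → Matrix (Fin n) (Fin n) ℝ)
    (hJ₂ : ∀ t ∈ J, (J₂ t)ᵀ = -(J₂ t))
    (G : Matrix (Fin n) (Fin m) ℝ) (Kv : Matrix (Fin m) (Fin m) ℝ)
    (hKv : Kv.IsSymm)
    (hqdyn : ∀ t ∈ J,
      HasDerivAt q (((M t)⁻¹ * Md t).mulVec (gradp (q t) (p t))) t)
    (hpdyn : ∀ t ∈ J,
      HasDerivAt p (-((Md t * (M t)⁻¹).mulVec (gradq (q t) (p t)))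
        + (J₂ t - G * Kv * Gᵀ).mulVec (gradp (q t) (p t))) t) :
    ∀ t ∈ J,
      HasDerivAt (fun s => Hd (q s) (p s))
        (-(gradp (q t) (p t) ⬝ᵥ (G * Kv * Gᵀ).mulVec (gradp (q t) (p t)))) t :=
  stmt16_general n m J q p Hd hHdC1 gradq gradp hgrad M Md hMsymm hMdsymm J₂ hJ₂ G Kv hqdyn hpdyn
end
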